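/- arXiv:2605.16307 — 3 statements merged into one kernel-verified Lean document; each statement's English description precedes it below -/
import Mathlib

section
/- For every real p with 1 < p < 2, the inequality (p/(p-1))^{p-1} > p holds; consequently the bound (p/(p-1))^{p-1} (2/d)^p is strictly larger than the Benedikt–Drábek bound p · 2^p / d^p for all d > 0 when 1 < p < 2. -/
open Real

theorem stmt_5 (p : ℝ) (hp1 : 1 < p) (hp2 : p < 2) :
    (p / (p - 1)) ^ (p - 1) > p ∧
    ∀ d : ℝ, 0 < d →
      (p / (p - 1)) ^ (p - 1) * (2 / d) ^ p > p * 2 ^ p / d ^ p := by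
  have hq0 : (0:ℝ) < p - 1 := by linarith
  have hq1 : p - 1 < 1 := by linarith
  have hp0 : (0:ℝ) < p := by linarith
  have hratio : (0:ℝ) < p / (p - 1) := div_pos hp0 hq0
  have hlogp : Real.log p < p - 1 := Real.log_lt_sub_one_of_pos hp0 (by linarith)
  have hlogp0 : 0 < Real.log p := Real.log_pos hp1
  have hlogq : Real.log (p - 1) < (p - 1) - 1 :=
    Real.log_lt_sub_one_of_pos hq0 (by linarith)
  have hkey : Real.log p < (p - 1) * (Real.log p - Real.log (p - 1)) := by
    nlinarith [hlogp, hlogq, hlogp0, hq0, hq1]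
  have hmain : p < (p / (p - 1)) ^ (p - 1) := by
    rw [Real.rpow_def_of_pos hratio, Real.log_div (ne_of_gt hp0) (ne_of_gt hq0)]
    calc p = Real.exp (Real.log p) := (Real.exp_log hp0).symm
    _ < Real.exp ((Real.log p - Real.log (p - 1)) * (p - 1)) := by
        rw [mul_comm] at hkey; exact Real.exp_lt_exp.mpr hkey
  refine ⟨hmain, fun d hd => ?_⟩
  have h2 : ((2:ℝ) / d) ^ p = 2 ^ p / d ^ p :=
    Real.div_rpow (by norm_num) hd.le p
  have hpos : 0 < (2:ℝ) ^ p / d ^ p :=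
    div_pos (Real.rpow_pos_of_pos (by norm_num) p) (Real.rpow_pos_of_pos hd p)
  rw [h2]
  calc p * 2 ^ p / d ^ p = p * (2 ^ p / d ^ p) := by ring
  _ < (p / (p - 1)) ^ (p - 1) * (2 ^ p / d ^ p) :=
      mul_lt_mul_of_pos_right hmain hpos
end

section
/- Let q > 0, λ > 0, d > 0. Then there exists p₀ > 1 such that for all p ≥ p₀, the map x ↦ λ^{1/(p-1)} ((p-1)/p) (d/2)^{p/(p-1)} exp(x^q/(p-1)) has a positive fixed point. -/
/-! As `p → ∞` the coefficient in front of the exponential tends to `d / 2` and the exponential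
at `x = d` tends to `1`, so for large `p` the map sends `d` below `d`. It sends `0` to a positive
number, so the intermediate value theorem gives a fixed point in `(0, d]`. -/

open Real Filter Set Topology Function

theorem exists_pos_isFixedPt_of_continuousOn {f : ℝ → ℝ} {b : ℝ} (hf : ContinuousOn f (Icc 0 b))
    (hb : 0 ≤ b) (h0 : 0 < f 0) (hfb : f b ≤ b) : ∃ x, 0 < x ∧ IsFixedPt f x := by
  obtain ⟨x, hx, hfix⟩ := exists_mem_Icc_isFixedPt hf hb h0.le hfb
  refine ⟨x, hx.1.lt_of_ne ?_, hfix⟩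
  rintro rfl
  exact h0.ne' hfix

theorem tendsto_const_div_sub_one_atTop (c : ℝ) : Tendsto (fun p : ℝ => c / (p - 1)) atTop (𝓝 0) :=
  tendsto_const_nhds.div_atTop (tendsto_atTop_add_const_right _ (-1) tendsto_id)

theorem tendsto_sub_one_div_self_atTop : Tendsto (fun p : ℝ => (p - 1) / p) atTop (𝓝 1) := by
  have h : Tendsto (fun p : ℝ => 1 - p⁻¹) atTop (𝓝 (1 - 0)) :=
    tendsto_const_nhds.sub tendsto_inv_atTop_zero
  rw [sub_zero] at h
  refine h.congr' ?_
  filter_upwards [eventually_ne_atTop 0] with p hp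
  field_simp

theorem tendsto_div_sub_one_atTop : Tendsto (fun p : ℝ => p / (p - 1)) atTop (𝓝 1) := by
  have h : Tendsto (fun p : ℝ => 1 + 1 / (p - 1)) atTop (𝓝 (1 + 0)) :=
    tendsto_const_nhds.add (tendsto_const_div_sub_one_atTop 1)
  rw [add_zero] at h
  refine h.congr' ?_
  filter_upwards [eventually_ne_atTop 1] with p hp
  have : p - 1 ≠ 0 := sub_ne_zero.2 hp
  field_simp
  ring

theorem tendsto_rpow_one_div_sub_one_mul_exp_atTop {a b : ℝ} (ha : 0 < a) (hb : 0 < b) (c : ℝ) :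
    Tendsto (fun p : ℝ => a ^ (1 / (p - 1)) * ((p - 1) / p) * b ^ (p / (p - 1)) *
      exp (c / (p - 1))) atTop (𝓝 b) := by
  have hpow_a : Tendsto (fun p : ℝ => a ^ (1 / (p - 1))) atTop (𝓝 1) := by
    simpa using tendsto_const_nhds.rpow (tendsto_const_div_sub_one_atTop 1) (.inl ha.ne')
  have hpow_b : Tendsto (fun p : ℝ => b ^ (p / (p - 1))) atTop (𝓝 b) := by
    simpa using tendsto_const_nhds.rpow tendsto_div_sub_one_atTop (.inl hb.ne')
  have hexp : Tendsto (fun p : ℝ => exp (c / (p - 1))) atTop (𝓝 1) := by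
    simpa using (tendsto_const_div_sub_one_atTop c).rexp
  simpa using ((hpow_a.mul tendsto_sub_one_div_self_atTop).mul hpow_b).mul hexp

theorem stmt_17 (q lam d : ℝ) (hq : 0 < q) (hlam : 0 < lam) (hd : 0 < d) :
    ∃ p₀ : ℝ, 1 < p₀ ∧ ∀ p : ℝ, p₀ ≤ p →
      ∃ x : ℝ, 0 < x ∧
        lam ^ (1 / (p - 1)) * ((p - 1) / p) * (d / 2) ^ (p / (p - 1)) *
          Real.exp (x ^ q / (p - 1)) = x := by
  have hlim := tendsto_rpow_one_div_sub_one_mul_exp_atTop hlam (half_pos hd) (d ^ q)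
  obtain ⟨p₁, hp₁⟩ := (hlim.eventually (gt_mem_nhds (half_lt_self hd))).exists_forall_of_atTop
  refine ⟨max p₁ 2, one_lt_two.trans_le (le_max_right _ _), fun p hp => ?_⟩
  have hp1 : 0 < p - 1 := by linarith [le_max_right p₁ 2]
  have hcoef : 0 < (p - 1) / p := div_pos hp1 (by linarith)
  refine exists_pos_isFixedPt_of_continuousOn
    (f := fun x => lam ^ (1 / (p - 1)) * ((p - 1) / p) * (d / 2) ^ (p / (p - 1)) *
      exp (x ^ q / (p - 1))) ?_ hd.le ?_ (hp₁ p (le_of_max_le_left hp)).le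
  · exact Continuous.continuousOn (by fun_prop (disch := exact hq.le))
  · simp only [zero_rpow hq.ne', zero_div, exp_zero, mul_one]
    positivity
end

section
/- Fix λ > 0 and p > 1, and let q > 0. There exists d₀ > 0 such that for all 0 < d ≤ d₀, the map x ↦ λ^{1/(p-1)} ((p-1)/p) (d/2)^{p/(p-1)} exp(x^q/(p-1)) has a positive fixed point. -/
open Real

theorem stmt_18 (lam p q : ℝ) (hlam : 0 < lam) (hp : 1 < p) (hq : 0 < q) :
    ∃ d₀ : ℝ, 0 < d₀ ∧ ∀ d : ℝ, 0 < d → d ≤ d₀ →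
      ∃ x : ℝ, 0 < x ∧
        lam ^ (1 / (p - 1)) * ((p - 1) / p) * (d / 2) ^ (p / (p - 1)) *
          Real.exp (x ^ q / (p - 1)) = x := by
  have hk0 : 0 < p - 1 := by linarith
  have hp0 : 0 < p := by linarith
  set k := p - 1 with hk
  set A := lam ^ (1/k) * (k/p) * Real.exp (1/k) with hA
  have hA0 : 0 < A := by positivity
  set r := p / k with hr
  have hr0 : 0 < r := by positivity
  refine ⟨2 * (A⁻¹) ^ r⁻¹, by positivity, ?_⟩
  intro d hd hdle
  have hbound : lam ^ (1/k) * (k/p) * (d/2) ^ r * Real.exp (1/k) ≤ 1 := by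
    have h1 : (d/2) ^ r ≤ ((A⁻¹) ^ r⁻¹) ^ r :=
      Real.rpow_le_rpow (by linarith) (by linarith) hr0.le
    have h2 : ((A⁻¹:ℝ) ^ r⁻¹) ^ r = A⁻¹ := Real.rpow_inv_rpow (by positivity) hr0.ne'
    calc lam ^ (1/k) * (k/p) * (d/2)^r * Real.exp (1/k)
        = A * (d/2)^r := by ring
      _ ≤ A * A⁻¹ := by
          rw [h2] at h1; exact mul_le_mul_of_nonneg_left h1 hA0.le
      _ = 1 := mul_inv_cancel₀ hA0.ne'
  set C := lam ^ (1/k) * (k/p) * (d/2) ^ r with hC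
  have hC0 : 0 < C := by positivity
  set g := fun x : ℝ => C * Real.exp (x ^ q / k) - x with hg
  have hcont : ContinuousOn g (Set.Icc 0 1) := by
    apply Continuous.continuousOn
    apply Continuous.sub _ continuous_id
    apply continuous_const.mul
    apply Real.continuous_exp.comp
    apply Continuous.div_const
    exact continuous_iff_continuousAt.2 fun x => Real.continuousAt_rpow_const x q (Or.inr hq.le)
  have hg0 : g 0 = C := by
    simp [hg, Real.zero_rpow hq.ne']
  have hg1 : g 1 ≤ 0 := by
    have : g 1 = C * Real.exp (1/k) - 1 := by simp [hg, Real.one_rpow]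
    rw [this]; linarith
  have hmem : (0:ℝ) ∈ Set.Icc (g 1) (g 0) := ⟨hg1, by rw [hg0]; exact hC0.le⟩
  obtain ⟨x, hx, hgx⟩ := intermediate_value_Icc' (by norm_num : (0:ℝ) ≤ 1) hcont hmem
  refine ⟨x, ?_, ?_⟩
  · have : C * Real.exp (x ^ q / k) = x := by
      have := hgx
      simp only [hg] at this
      linarith
    have hpos : 0 < C * Real.exp (x ^ q / k) := by positivity
    linarith [this ▸ hpos]
  · have := hgx
    simp only [hg] at this
    linarith
end
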